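/- Let P be a simple convex polytope with m facets and let Hⱼ ⊂ (ℤ₂)ᵐ be the subgroup generated by e₁,…,eⱼ, with Y⁽ʲ⁾ = η(P × Hⱼ) ⊂ ℝ𝒵_P and F⁽ʲ⁾_i = η(Fᵢ × Hⱼ), where η: P × (ℤ₂)ᵐ → ℝ𝒵_P is the quotient map. Then for each 0 ≤ j ≤ m−1, Y^{(j+1)} is homeomorphic to the double of Y⁽ʲ⁾ along F⁽ʲ⁾_{j+1}, i.e., to the quotient of two copies of Y⁽ʲ⁾ glued by the identity along F⁽ʲ⁾_{j+1}. -/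

import Mathlib

/-! The map `Y⁽ʲ⁾ × {0, 1} → Y⁽ʲ⁺¹⁾, (y, ε) ↦ y + ε e_{j+1}` descends to the double, because
translation by `e_{j+1}` fixes `F⁽ʲ⁾_{j+1}` pointwise (`e_{j+1} ∈ G_{f(p)}` for `p ∈ F_{j+1}`).
Its inverse is `[p, g] ↦ ([p, g restricted to the first j coordinates], g_{j+1})`. This is well
defined on all of `ℝ𝒵_P`: `G_{f(p)}` consists of the `g` supported on `{i | p ∈ Fᵢ}`, so it is
stable under restricting coordinates, and if two representatives differ in coordinate `j+1`
then `p ∈ F_{j+1}`, where the two sheets are glued. Both maps are continuous since `(ℤ₂)ᵐ` is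
discrete. Coordinates are 0-based, so `e_{j+1}` is `eVec m ⟨j, hj⟩`. -/

open Set

noncomputable section

instance : TopologicalSpace (ZMod 2) := ⊥

/-- The `i`-th standard basis vector `eᵢ` of `(ℤ₂)ᵐ`. -/
def eVec (m : ℕ) (i : Fin m) : Fin m → ZMod 2 := Pi.single i 1

/-- `G_{f(p)}`: the subgroup of `(ℤ₂)ᵐ` generated by the `eᵢ` with `p ∈ Fᵢ`. -/
def Gface {n m : ℕ} (F : Fin m → Set (EuclideanSpace ℝ (Fin n)))
    (p : EuclideanSpace ℝ (Fin n)) : AddSubgroup (Fin m → ZMod 2) :=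
  AddSubgroup.closure {g | ∃ i, p ∈ F i ∧ g = eVec m i}

/-- The identification `(p,g) ∼ (p',g')` iff `p = p'` and `g - g' ∈ G_{f(p)}`. -/
def rzRel {n m : ℕ} (P : Set (EuclideanSpace ℝ (Fin n)))
    (F : Fin m → Set (EuclideanSpace ℝ (Fin n)))
    (a b : ↥P × (Fin m → ZMod 2)) : Prop :=
  a.1 = b.1 ∧ a.2 - b.2 ∈ Gface F (a.1 : EuclideanSpace ℝ (Fin n))

/-- The real moment-angle space `ℝ𝒵_P`. -/
def RZ {n m : ℕ} (P : Set (EuclideanSpace ℝ (Fin n)))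
    (F : Fin m → Set (EuclideanSpace ℝ (Fin n))) : Type :=
  Quot (rzRel P F)

instance {n m : ℕ} (P : Set (EuclideanSpace ℝ (Fin n)))
    (F : Fin m → Set (EuclideanSpace ℝ (Fin n))) : TopologicalSpace (RZ P F) :=
  instTopologicalSpaceQuot

/-- The subgroup `Hⱼ ⊆ (ℤ₂)ᵐ` generated by `e₁, …, eⱼ` (as a subset: the elements supported
on the first `j` coordinates). -/
def Hset (m j : ℕ) : Set (Fin m → ZMod 2) := {g | ∀ i : Fin m, j ≤ (i : ℕ) → g i = 0}

/-- `Y⁽ʲ⁾ = η(P × Hⱼ) ⊆ ℝ𝒵_P`. -/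
def Yj {n m : ℕ} (P : Set (EuclideanSpace ℝ (Fin n)))
    (F : Fin m → Set (EuclideanSpace ℝ (Fin n))) (j : ℕ) : Set (RZ P F) :=
  {z | ∃ (p : ↥P) (g : Fin m → ZMod 2), g ∈ Hset m j ∧ z = Quot.mk (rzRel P F) (p, g)}

/-- `F⁽ʲ⁾_i = η(Fᵢ × Hⱼ) ⊆ ℝ𝒵_P`. -/
def Fji {n m : ℕ} (P : Set (EuclideanSpace ℝ (Fin n)))
    (F : Fin m → Set (EuclideanSpace ℝ (Fin n))) (j : ℕ) (i : Fin m) : Set (RZ P F) :=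
  {z | ∃ (p : ↥P) (g : Fin m → ZMod 2), g ∈ Hset m j ∧
        (p : EuclideanSpace ℝ (Fin n)) ∈ F i ∧ z = Quot.mk (rzRel P F) (p, g)}

/-- The double of `X` along `A ⊆ X`: two copies of `X` glued by the identity along `A`. -/
def DoubleRel {X : Type*} (A : Set X) (a b : X × Bool) : Prop :=
  a.1 = b.1 ∧ (a.2 = b.2 ∨ a.1 ∈ A)

instance : DiscreteTopology (ZMod 2) := ⟨rfl⟩

lemma ZMod.two_eq_zero_or_eq_one (x : ZMod 2) : x = 0 ∨ x = 1 := by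
  revert x; decide

section Double

variable {X Y : Type*} {A : Set X}

def doubleLift (f₀ f₁ : X → Y) (h : ∀ x ∈ A, f₀ x = f₁ x) : Quot (DoubleRel A) → Y :=
  Quot.lift (fun x => cond x.2 (f₁ x.1) (f₀ x.1)) <| by
    rintro ⟨x, b⟩ ⟨x', b'⟩ ⟨rfl, rfl | hx⟩
    · rfl
    · cases b <;> cases b' <;> simp [h x hx]

@[simp]
lemma doubleLift_mk (f₀ f₁ : X → Y) (h : ∀ x ∈ A, f₀ x = f₁ x) (x : X) (b : Bool) :
    doubleLift f₀ f₁ h (Quot.mk _ (x, b)) = cond b (f₁ x) (f₀ x) :=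
  rfl

lemma continuous_doubleLift [TopologicalSpace X] [TopologicalSpace Y] {f₀ f₁ : X → Y}
    (h : ∀ x ∈ A, f₀ x = f₁ x) (hf₀ : Continuous f₀) (hf₁ : Continuous f₁) :
    Continuous (doubleLift f₀ f₁ h) :=
  continuous_quot_lift _ <| continuous_prod_of_discrete_right.2 fun b => by
    cases b
    exacts [hf₀, hf₁]

end Double

variable {n m : ℕ} {P : Set (EuclideanSpace ℝ (Fin n))}
  {F : Fin m → Set (EuclideanSpace ℝ (Fin n))}

lemma mem_Gface_iff {p : EuclideanSpace ℝ (Fin n)} {g : Fin m → ZMod 2} :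
    g ∈ Gface F p ↔ Function.support g ⊆ {i | p ∈ F i} := by
  constructor
  · intro hg
    induction hg using AddSubgroup.closure_induction with
    | mem x hx =>
      obtain ⟨i, hi, rfl⟩ := hx
      intro k hk
      obtain rfl : k = i := by by_contra hne; simp [eVec, hne] at hk
      exact hi
    | zero => simp
    | add x y _ _ hx hy => exact (Function.support_add x y).trans (union_subset hx hy)
    | neg x _ hx => rwa [Function.support_neg]
  · intro hg
    rw [← Finset.univ_sum_single g]
    refine AddSubgroup.sum_mem _ fun i _ => ?_
    rcases ZMod.two_eq_zero_or_eq_one (g i) with h0 | h1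
    · simp [h0]
    · exact AddSubgroup.subset_closure ⟨i, hg (by simp [h1]), by rw [h1, eVec]⟩

def lowerPart (j : ℕ) (g : Fin m → ZMod 2) : Fin m → ZMod 2 :=
  {i : Fin m | (i : ℕ) < j}.indicator g

section lowerPart

variable {j : ℕ} {g g' : Fin m → ZMod 2}

lemma lowerPart_mem_Hset (j : ℕ) (g : Fin m → ZMod 2) : lowerPart j g ∈ Hset m j :=
  fun i hi => indicator_of_notMem (by simpa using hi) g

lemma lowerPart_eq_self (hg : g ∈ Hset m j) : lowerPart j g = g := by
  refine indicator_eq_self.2 fun i hi => ?_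
  by_contra hij
  exact hi (hg i (not_lt.1 hij))

lemma lowerPart_sub_mem_Gface {p : EuclideanSpace ℝ (Fin n)} (h : g - g' ∈ Gface F p) :
    lowerPart j g - lowerPart j g' ∈ Gface F p := by
  rw [mem_Gface_iff] at h ⊢
  rw [lowerPart, lowerPart, ← indicator_sub', support_indicator]
  exact inter_subset_right.trans h

lemma lowerPart_add_eVec (hj : j < m) (g : Fin m → ZMod 2) :
    lowerPart j (g + eVec m ⟨j, hj⟩) = lowerPart j g := by
  funext i
  by_cases hi : (i : ℕ) < j
  · have : i ≠ ⟨j, hj⟩ := fun h => by simp [h] at hi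
    simp [lowerPart, hi, eVec, this]
  · simp [lowerPart, hi]

lemma lowerPart_add_single (hj : j < m) (hg : g ∈ Hset m (j + 1)) :
    lowerPart j g + Pi.single ⟨j, hj⟩ (g ⟨j, hj⟩) = g := by
  funext i
  rcases lt_trichotomy (i : ℕ) j with hi | hi | hi
  · have : i ≠ ⟨j, hj⟩ := fun h => by simp [h] at hi
    simp [lowerPart, hi, this]
  · obtain rfl : i = ⟨j, hj⟩ := Fin.ext hi
    simp [lowerPart]
  · have : i ≠ ⟨j, hj⟩ := fun h => by simp [h] at hi
    simp [lowerPart, hi.not_gt, this, hg i hi]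

lemma Hset_subset_succ (m j : ℕ) : Hset m j ⊆ Hset m (j + 1) :=
  fun _ hg i hi => hg i (by omega)

lemma add_eVec_mem_Hset_succ (hj : j < m) (hg : g ∈ Hset m j) :
    g + eVec m ⟨j, hj⟩ ∈ Hset m (j + 1) := by
  intro i hi
  have : i ≠ ⟨j, hj⟩ := fun h => by simp [h] at hi
  simp [hg i (by omega), eVec, this]

end lowerPart

namespace RZ

def translate (c : Fin m → ZMod 2) : RZ P F → RZ P F :=
  Quot.lift (fun a => Quot.mk (rzRel P F) (a.1, a.2 + c)) fun _ _ h =>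
    Quot.sound ⟨h.1, by simpa using h.2⟩

@[simp]
lemma translate_mk (c : Fin m → ZMod 2) (p : P) (g : Fin m → ZMod 2) :
    translate c (Quot.mk (rzRel P F) (p, g)) = Quot.mk (rzRel P F) (p, g + c) :=
  rfl

lemma continuous_translate (c : Fin m → ZMod 2) : Continuous (translate (P := P) (F := F) c) :=
  continuous_quot_lift _ <| continuous_quot_mk.comp <|
    continuous_fst.prodMk <| (continuous_of_discreteTopology (f := (· + c))).comp continuous_snd

lemma translate_eVec_eq_self_of_mem_Fji {j : ℕ} {i : Fin m} {z : RZ P F}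
    (hz : z ∈ Fji P F j i) : translate (eVec m i) z = z := by
  obtain ⟨p, g, -, hp, rfl⟩ := hz
  refine Quot.sound ⟨rfl, ?_⟩
  rw [add_sub_cancel_left]
  exact AddSubgroup.subset_closure ⟨i, hp, rfl⟩

lemma Yj_subset_succ (j : ℕ) : Yj P F j ⊆ Yj P F (j + 1) := by
  rintro _ ⟨p, g, hg, rfl⟩
  exact ⟨p, g, Hset_subset_succ m j hg, rfl⟩

lemma translate_eVec_mem_Yj_succ {j : ℕ} (hj : j < m) {z : RZ P F} (hz : z ∈ Yj P F j) :
    translate (eVec m ⟨j, hj⟩) z ∈ Yj P F (j + 1) := by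
  obtain ⟨p, g, hg, rfl⟩ := hz
  exact ⟨p, g + eVec m ⟨j, hj⟩, add_eVec_mem_Hset_succ hj hg, rfl⟩

end RZ

section Doubling

open RZ

variable (P F) {j : ℕ} (hj : j < m)

abbrev doublingFace : Set (Yj P F j) := {w | (w : RZ P F) ∈ Fji P F j ⟨j, hj⟩}

def doubleToYjSucc : Quot (DoubleRel (doublingFace P F hj)) → Yj P F (j + 1) :=
  doubleLift (inclusion (Yj_subset_succ j))
    (fun w => ⟨translate (eVec m ⟨j, hj⟩) w, translate_eVec_mem_Yj_succ hj w.2⟩)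
    fun _ hw => Subtype.ext (translate_eVec_eq_self_of_mem_Fji hw).symm

def rzToDouble : RZ P F → Quot (DoubleRel (doublingFace P F hj)) :=
  Quot.lift (fun a => Quot.mk _
      (⟨Quot.mk _ (a.1, lowerPart j a.2), a.1, _, lowerPart_mem_Hset j a.2, rfl⟩,
        decide (a.2 ⟨j, hj⟩ = 1))) <| by
    rintro ⟨p, g⟩ ⟨p', g'⟩ ⟨rfl, hgg'⟩
    refine Quot.sound ⟨Subtype.ext (Quot.sound ⟨rfl, lowerPart_sub_mem_Gface hgg'⟩), ?_⟩
    by_cases hgj : g ⟨j, hj⟩ = g' ⟨j, hj⟩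
    · exact Or.inl (by simp [hgj])
    · refine Or.inr ⟨p, _, lowerPart_mem_Hset j g, mem_Gface_iff.1 hgg' ?_, rfl⟩
      simpa [sub_eq_zero] using hgj

@[simp]
lemma rzToDouble_mk (p : P) (g : Fin m → ZMod 2) :
    rzToDouble P F hj (Quot.mk _ (p, g)) = Quot.mk _
      (⟨Quot.mk _ (p, lowerPart j g), p, _, lowerPart_mem_Hset j g, rfl⟩,
        decide (g ⟨j, hj⟩ = 1)) :=
  rfl

lemma continuous_doubleToYjSucc : Continuous (doubleToYjSucc P F hj) :=
  continuous_doubleLift _ (continuous_inclusion _) <| Continuous.subtype_mk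
    ((continuous_translate _).comp continuous_subtype_val) _

lemma continuous_rzToDouble : Continuous (rzToDouble P F hj) :=
  continuous_quot_lift _ <| continuous_quot_mk.comp <| Continuous.prodMk
    (Continuous.subtype_mk (continuous_quot_mk.comp <| continuous_fst.prodMk <|
      (continuous_of_discreteTopology (f := lowerPart j)).comp continuous_snd) _)
    ((continuous_of_discreteTopology (f := fun g : Fin m → ZMod 2 => decide (g ⟨j, hj⟩ = 1))).comp
      continuous_snd)

lemma rzToDouble_doubleToYjSucc (q : Quot (DoubleRel (doublingFace P F hj))) :
    rzToDouble P F hj (doubleToYjSucc P F hj q) = q := by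
  obtain ⟨⟨_, p, g, hg, rfl⟩, b⟩ := q
  have hgj : g ⟨j, hj⟩ = 0 := hg _ le_rfl
  cases b
  · simp [doubleToYjSucc, lowerPart_eq_self hg, hgj]
  · simp only [doubleToYjSucc, doubleLift_mk, cond_true, translate_mk, rzToDouble_mk,
      lowerPart_add_eVec, lowerPart_eq_self hg]
    simp [hgj, eVec]

lemma doubleToYjSucc_rzToDouble (y : Yj P F (j + 1)) :
    doubleToYjSucc P F hj (rzToDouble P F hj y) = y := by
  obtain ⟨_, p, g, hg, rfl⟩ := y
  apply Subtype.ext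
  change _ = Quot.mk (rzRel P F) (p, g)
  conv_rhs => rw [← lowerPart_add_single hj hg]
  rcases ZMod.two_eq_zero_or_eq_one (g ⟨j, hj⟩) with h | h
  · simp [h, doubleToYjSucc]
  · simp [h, doubleToYjSucc, eVec]

end Doubling

/-- For `0 ≤ j ≤ m - 1`, the space `Y^{(j+1)}` is homeomorphic to the
double of `Y⁽ʲ⁾` along `F⁽ʲ⁾_{j+1}`. -/
theorem stmt10 (n m : ℕ)
    (P : Set (EuclideanSpace ℝ (Fin n)))
    (F : Fin m → Set (EuclideanSpace ℝ (Fin n)))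
    (j : ℕ) (hj : j < m) :
    Nonempty
      (Quot (DoubleRel {w : ↥(Yj P F j) | (w : RZ P F) ∈ Fji P F j ⟨j, hj⟩})
        ≃ₜ ↥(Yj P F (j + 1))) :=
  ⟨{ toFun := doubleToYjSucc P F hj
     invFun := fun y => rzToDouble P F hj y
     left_inv := rzToDouble_doubleToYjSucc P F hj
     right_inv := doubleToYjSucc_rzToDouble P F hj
     continuous_toFun := continuous_doubleToYjSucc P F hj
     continuous_invFun := (continuous_rzToDouble P F hj).comp continuous_subtype_val }⟩
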